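/- Let $a, b$ be positive continuous even functions on $\mathbb{R}$ and $G$ continuous even with $G \ge G(M) = 0$ on $\mathbb{R}$ and $G > 0$ on $[0,M)$ for some $M > 0$. Suppose $G(s) \le G(0)$ for all $s \in (0,M)$ and $\sup_{t\in(0,L)}\left(\int_t^L \frac{1}{a}\right)\left(\int_0^t b\right) > \frac{M^2}{2G(0)}$. Then $\inf_{v \in H^1_0((-L,L))} \mathcal{E}(v,(-L,L)) < \mathcal{E}(0,(-L,L))$, i.e. the zero function is not a minimizer of $\mathcal{E}(\cdot,(-L,L))$ among $H^1$ functions vanishing at $\pm L$. -/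

import Mathlib

/-!
Test the energy against the even function `v` equal to `M` on `[-t, t]` and to `M φ` on `[t, L]`,
where `φ x = (∫ₓᴸ 1/a) / (∫ₜᴸ 1/a)` is the `a`-harmonic function with `φ t = 1`, `φ L = 0`.
On the plateau the potential `b G(M)` vanishes; on `[t, L]` it is at most `b G(0)` because
`0 ≤ v ≤ M`, and the Dirichlet energy there is `M² / (2 ∫ₜᴸ 1/a)`. Hence
`𝓔(v) ≤ M² / ∫ₜᴸ 1/a + 2 G(0) ∫ₜᴸ b`, which is below `𝓔(0) = 2 G(0) (∫₀ᵗ b + ∫ₜᴸ b)` exactly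
under the hypothesis on `t`. As `v` has corners at `± t`, `φ` is composed with a `C¹` ramp `h`
(`h = 1` on `[1, ∞)`) whose Dirichlet energy `∫₀¹ h'²` exceeds that of the identity by at most
`1 / n`, and the strict inequality absorbs this excess.
-/

open Set intervalIntegral MeasureTheory Filter Topology

noncomputable section

lemma integral_eq_two_mul_of_even {f : ℝ → ℝ} (hf : Continuous f) (heven : ∀ x, f (-x) = f x)
    (L : ℝ) : ∫ x in (-L)..L, f x = 2 * ∫ x in (0:ℝ)..L, f x := by
  have hneg : ∫ x in (-L)..0, f x = ∫ x in (0:ℝ)..L, f x := by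
    simpa [heven] using (integral_comp_neg (a := 0) (b := L) f).symm
  rw [← integral_add_adjacent_intervals (hf.intervalIntegrable _ 0) (hf.intervalIntegrable 0 _),
    hneg]
  ring

lemma integral_mul_const_eq_of_even {b : ℝ → ℝ} (hbc : Continuous b) (hbeven : ∀ x, b (-x) = b x)
    (c t L : ℝ) : ∫ x in (-L)..L, b x * c =
      2 * c * (∫ x in (0:ℝ)..t, b x) + 2 * c * ∫ x in t..L, b x := by
  rw [integral_eq_two_mul_of_even (hbc.mul_const c) (fun x => by rw [hbeven]),
    intervalIntegral.integral_mul_const, ← integral_add_adjacent_intervals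
      (hbc.intervalIntegrable 0 t) (hbc.intervalIntegrable t L)]
  ring

lemma exists_ne_zero_mul_one_add_one_div_lt {c d : ℝ} (h : c < d) :
    ∃ n : ℕ, n ≠ 0 ∧ c * (1 + 1 / n) < d := by
  have hlim : Tendsto (fun n : ℕ => c * (1 + 1 / (n : ℝ))) atTop (𝓝 c) := by
    simpa using (tendsto_one_div_atTop_nhds_zero_nat.const_add 1).const_mul c
  exact ((eventually_ne_atTop 0).and (hlim.eventually (gt_mem_nhds h))).exists

structure IsRampProfile (h h' : ℝ → ℝ) : Prop where
  hasDerivAt : ∀ s, HasDerivAt h (h' s) s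
  continuous_deriv : Continuous h'
  map_zero : h 0 = 0
  eq_one : ∀ s, 1 ≤ s → h s = 1
  deriv_eq_zero : ∀ s, 1 ≤ s → h' s = 0
  mem_Icc : ∀ s ∈ Icc (0:ℝ) 1, h s ∈ Icc (0:ℝ) 1

def rampDeriv (n : ℕ) (s : ℝ) : ℝ := (1 + 1 / n) * (1 - min s 1 ^ n)

-- On `[0, 1]`, `ramp n s = ((n + 1) s - s ^ (n + 1)) / n`, which reaches `1` with slope `0`.
def ramp (n : ℕ) (s : ℝ) : ℝ := ∫ u in (0:ℝ)..s, rampDeriv n u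

lemma continuous_rampDeriv (n : ℕ) : Continuous (rampDeriv n) := by
  unfold rampDeriv
  fun_prop

lemma rampDeriv_of_one_le (n : ℕ) {s : ℝ} (hs : 1 ≤ s) : rampDeriv n s = 0 := by
  simp [rampDeriv, min_eq_right hs]

lemma rampDeriv_mem_Icc (n : ℕ) {s : ℝ} (hs : 0 ≤ s) :
    rampDeriv n s ∈ Icc (0:ℝ) (1 + 1 / (n:ℝ)) := by
  have h0 : 0 ≤ min s 1 ^ n := pow_nonneg (le_min hs zero_le_one) n
  have h1 : min s 1 ^ n ≤ 1 := pow_le_one₀ (le_min hs zero_le_one) (min_le_right s 1)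
  have hc : (0:ℝ) ≤ 1 + 1 / n := by positivity
  exact ⟨mul_nonneg hc (by linarith), mul_le_of_le_one_right hc (by linarith)⟩

lemma ramp_one {n : ℕ} (hn : n ≠ 0) : ramp n 1 = 1 := by
  have hpoly : ∫ u in (0:ℝ)..1, rampDeriv n u = ∫ u in (0:ℝ)..1, (1 + 1 / n) * (1 - u ^ n) :=
    integral_congr fun u hu => by
      rw [uIcc_of_le zero_le_one] at hu
      simp [rampDeriv, min_eq_left hu.2]
  rw [ramp, hpoly, intervalIntegral.integral_const_mul,
    integral_sub intervalIntegrable_const ((continuous_pow n).intervalIntegrable _ _), integral_pow]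
  field_simp
  simp

lemma ramp_of_one_le {n : ℕ} (hn : n ≠ 0) {s : ℝ} (hs : 1 ≤ s) : ramp n s = 1 := by
  have hflat : ∫ u in (1:ℝ)..s, rampDeriv n u = 0 := by
    rw [integral_congr (g := fun _ => (0:ℝ)) fun u hu =>
      rampDeriv_of_one_le n (uIcc_of_le hs ▸ hu).1, intervalIntegral.integral_zero]
  rw [ramp, ← integral_add_adjacent_intervals ((continuous_rampDeriv n).intervalIntegrable 0 1)
    ((continuous_rampDeriv n).intervalIntegrable 1 s), hflat, add_zero]
  exact ramp_one hn

lemma ramp_mem_Icc {n : ℕ} (hn : n ≠ 0) {s : ℝ} (hs : s ∈ Icc (0:ℝ) 1) : ramp n s ∈ Icc 0 1 := by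
  refine ⟨integral_nonneg hs.1 fun u hu => (rampDeriv_mem_Icc n hu.1).1, ?_⟩
  rw [← ramp_one hn]
  exact integral_mono_interval le_rfl hs.1 hs.2
    ((ae_restrict_mem measurableSet_Ioc).mono fun u hu => (rampDeriv_mem_Icc n hu.1.le).1)
    ((continuous_rampDeriv n).intervalIntegrable _ _)

lemma isRampProfile_ramp {n : ℕ} (hn : n ≠ 0) : IsRampProfile (ramp n) (rampDeriv n) where
  hasDerivAt s := ((continuous_rampDeriv n).integral_hasStrictDerivAt 0 s).hasDerivAt
  continuous_deriv := continuous_rampDeriv n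
  map_zero := integral_same
  eq_one _ := ramp_of_one_le hn
  deriv_eq_zero _ := rampDeriv_of_one_le n
  mem_Icc _ := ramp_mem_Icc hn

lemma integral_sq_rampDeriv_le {n : ℕ} (hn : n ≠ 0) :
    ∫ s in (0:ℝ)..1, rampDeriv n s ^ 2 ≤ 1 + 1 / n :=
  calc ∫ s in (0:ℝ)..1, rampDeriv n s ^ 2
      ≤ ∫ s in (0:ℝ)..1, (1 + 1 / n) * rampDeriv n s := by
        refine integral_mono_on zero_le_one
          (((continuous_rampDeriv n).pow 2).intervalIntegrable _ _)
          (((continuous_rampDeriv n).const_mul _).intervalIntegrable _ _) fun s hs => ?_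
        obtain ⟨h0, h1⟩ := rampDeriv_mem_Icc n hs.1
        nlinarith
    _ = 1 + 1 / n := by rw [intervalIntegral.integral_const_mul, ← ramp, ramp_one hn, mul_one]

def capacitaryPotential (a : ℝ → ℝ) (L t x : ℝ) : ℝ :=
  (∫ y in x..L, 1 / a y) / ∫ y in t..L, 1 / a y

def capacitaryPotentialDeriv (a : ℝ → ℝ) (L t x : ℝ) : ℝ :=
  -(1 / a x) / ∫ y in t..L, 1 / a y

section CapacitaryPotential

variable {a : ℝ → ℝ} {L t : ℝ}

lemma continuous_one_div_of_pos (hac : Continuous a) (hapos : ∀ x, 0 < a x) :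
    Continuous fun x => 1 / a x :=
  continuous_const.div hac fun x => (hapos x).ne'

lemma integral_one_div_pos (hac : Continuous a) (hapos : ∀ x, 0 < a x) {x y : ℝ} (hxy : x < y) :
    0 < ∫ u in x..y, 1 / a u :=
  intervalIntegral_pos_of_pos_on ((continuous_one_div_of_pos hac hapos).intervalIntegrable _ _)
    (fun u _ => one_div_pos.mpr (hapos u)) hxy

lemma integral_one_div_le_of_le (hac : Continuous a) (hapos : ∀ x, 0 < a x) {x y : ℝ}
    (hxy : x ≤ y) (hyL : y ≤ L) : ∫ u in y..L, 1 / a u ≤ ∫ u in x..L, 1 / a u :=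
  integral_mono_interval hxy hyL le_rfl
    ((ae_restrict_mem measurableSet_Ioc).mono fun u _ => (one_div_pos.mpr (hapos u)).le)
    ((continuous_one_div_of_pos hac hapos).intervalIntegrable _ _)

lemma hasDerivAt_capacitaryPotential (hac : Continuous a) (hapos : ∀ x, 0 < a x) (x : ℝ) :
    HasDerivAt (capacitaryPotential a L t) (capacitaryPotentialDeriv a L t x) x :=
  have hc := continuous_one_div_of_pos hac hapos
  (integral_hasDerivAt_left (hc.intervalIntegrable _ _) (hc.stronglyMeasurableAtFilter _ _)
    hc.continuousAt).div_const _

lemma continuous_capacitaryPotential (hac : Continuous a) (hapos : ∀ x, 0 < a x) :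
    Continuous (capacitaryPotential a L t) :=
  continuous_iff_continuousAt.mpr fun x => (hasDerivAt_capacitaryPotential hac hapos x).continuousAt

lemma continuous_capacitaryPotentialDeriv (hac : Continuous a) (hapos : ∀ x, 0 < a x) :
    Continuous (capacitaryPotentialDeriv a L t) :=
  (continuous_one_div_of_pos hac hapos).neg.div_const _

lemma capacitaryPotential_right_eq_zero : capacitaryPotential a L t L = 0 := by
  simp [capacitaryPotential]

lemma capacitaryPotential_self_eq_one (hac : Continuous a) (hapos : ∀ x, 0 < a x) (htL : t < L) :
    capacitaryPotential a L t t = 1 :=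
  div_self (integral_one_div_pos hac hapos htL).ne'

lemma one_le_capacitaryPotential (hac : Continuous a) (hapos : ∀ x, 0 < a x) (htL : t < L)
    {x : ℝ} (hxt : x ≤ t) : 1 ≤ capacitaryPotential a L t x :=
  (one_le_div (integral_one_div_pos hac hapos htL)).mpr
    (integral_one_div_le_of_le hac hapos hxt htL.le)

lemma capacitaryPotential_mem_Icc (hac : Continuous a) (hapos : ∀ x, 0 < a x) (htL : t < L)
    {x : ℝ} (hx : x ∈ Icc t L) : capacitaryPotential a L t x ∈ Icc (0:ℝ) 1 := by
  have hI := integral_one_div_pos hac hapos htL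
  refine ⟨div_nonneg (integral_nonneg hx.2 fun u _ => (one_div_pos.mpr (hapos u)).le) hI.le, ?_⟩
  exact (div_le_one hI).mpr (integral_one_div_le_of_le hac hapos hx.1 hx.2)

end CapacitaryPotential

-- If `φ ≥ 1` on `(-∞, t]` and `h = 1` on `[1, ∞)`, the second summand is `1` for `x ≥ -t` and the
-- first one for `x ≤ t`: this is the even extension of `M * h ∘ φ` from `[-t, ∞)`, written so as
-- to be differentiable everywhere.
def plateauTest (h φ : ℝ → ℝ) (M x : ℝ) : ℝ := M * (h (φ x) + h (φ (-x)) - 1)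

def plateauTestDeriv (h' φ φ' : ℝ → ℝ) (M x : ℝ) : ℝ :=
  M * (h' (φ x) * φ' x - h' (φ (-x)) * φ' (-x))

section PlateauTest

variable {h h' φ φ' : ℝ → ℝ} {M t x : ℝ}

lemma hasDerivAt_plateauTest (hh : ∀ s, HasDerivAt h (h' s) s)
    (hφ : ∀ x, HasDerivAt φ (φ' x) x) (x : ℝ) :
    HasDerivAt (plateauTest h φ M) (plateauTestDeriv h' φ φ' M x) x := by
  have hleft := (hh (φ x)).comp x (hφ x)
  have hright := (hh (φ (-x))).comp x ((hφ (-x)).comp x (hasDerivAt_neg x))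
  exact (((hleft.add hright).sub_const 1).const_mul M).congr_deriv
    (by simp only [plateauTestDeriv]; ring)

lemma continuous_plateauTestDeriv (hh' : Continuous h') (hφ : Continuous φ) (hφ' : Continuous φ') :
    Continuous (plateauTestDeriv h' φ φ' M) := by
  unfold plateauTestDeriv
  fun_prop

lemma plateauTest_neg : plateauTest h φ M (-x) = plateauTest h φ M x := by
  simp only [plateauTest, neg_neg]
  ring

lemma plateauTestDeriv_neg : plateauTestDeriv h' φ φ' M (-x) = -plateauTestDeriv h' φ φ' M x := by
  simp only [plateauTestDeriv, neg_neg]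
  ring

lemma plateauTest_of_neg_le (hh : IsRampProfile h h') (hφ : ∀ x ≤ t, 1 ≤ φ x) (hx : -t ≤ x) :
    plateauTest h φ M x = M * h (φ x) := by
  rw [plateauTest, hh.eq_one (φ (-x)) (hφ _ (by linarith))]
  ring

lemma plateauTestDeriv_of_neg_le (hh : IsRampProfile h h') (hφ : ∀ x ≤ t, 1 ≤ φ x)
    (hx : -t ≤ x) : plateauTestDeriv h' φ φ' M x = M * (h' (φ x) * φ' x) := by
  rw [plateauTestDeriv, hh.deriv_eq_zero (φ (-x)) (hφ _ (by linarith))]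
  ring

end PlateauTest

def energyDensity (a b G v v' : ℝ → ℝ) (x : ℝ) : ℝ := 1 / 2 * a x * v' x ^ 2 + b x * G (v x)

def energy (a b G : ℝ → ℝ) (L : ℝ) (v v' : ℝ → ℝ) : ℝ :=
  ∫ x in (-L)..L, energyDensity a b G v v' x

def IsAdmissible (L : ℝ) (v v' : ℝ → ℝ) : Prop :=
  (∀ x ∈ Icc (-L) L, HasDerivWithinAt v (v' x) (Icc (-L) L) x) ∧
    ContinuousOn v' (Icc (-L) L) ∧ v (-L) = 0 ∧ v L = 0

section Energy

variable {a b G h h' φ φ' : ℝ → ℝ} {L t M x : ℝ}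

lemma energyDensity_nonneg {v v' : ℝ → ℝ} (hann : ∀ x, 0 ≤ a x) (hbnn : ∀ x, 0 ≤ b x)
    (hGnn : ∀ s, 0 ≤ G s) (x : ℝ) : 0 ≤ energyDensity a b G v v' x :=
  add_nonneg (mul_nonneg (mul_nonneg (by norm_num) (hann x)) (sq_nonneg _))
    (mul_nonneg (hbnn x) (hGnn _))

lemma energyDensity_neg {v v' : ℝ → ℝ} (haeven : ∀ x, a (-x) = a x)
    (hbeven : ∀ x, b (-x) = b x) (hv : ∀ x, v (-x) = v x) (hv' : ∀ x, v' (-x) = -v' x) (x : ℝ) :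
    energyDensity a b G v v' (-x) = energyDensity a b G v v' x := by
  simp only [energyDensity, haeven, hbeven, hv, hv', neg_sq]

lemma continuous_energyDensity {v v' : ℝ → ℝ} (hac : Continuous a) (hbc : Continuous b)
    (hGc : Continuous G) (hv : Continuous v) (hv' : Continuous v') :
    Continuous (energyDensity a b G v v') := by
  unfold energyDensity
  fun_prop

lemma energyDensity_plateauTest_eq_zero (hh : IsRampProfile h h') (hφ : ∀ x ≤ t, 1 ≤ φ x)
    (hGM : G M = 0) (hx : x ∈ Icc (-t) t) :
    energyDensity a b G (plateauTest h φ M) (plateauTestDeriv h' φ φ' M) x = 0 := by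
  simp [energyDensity, plateauTest_of_neg_le hh hφ hx.1, plateauTestDeriv_of_neg_le hh hφ hx.1,
    hh.eq_one _ (hφ x hx.2), hh.deriv_eq_zero _ (hφ x hx.2), hGM]

lemma energyDensity_plateauTest_le (hh : IsRampProfile h h') (hφ : ∀ x ≤ t, 1 ≤ φ x)
    (hbnn : 0 ≤ b x) (hG : ∀ s ∈ Icc 0 M, G s ≤ G 0) (hM : 0 ≤ M) (hx : -t ≤ x)
    (hφx : φ x ∈ Icc 0 1) :
    energyDensity a b G (plateauTest h φ M) (plateauTestDeriv h' φ φ' M) x ≤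
      1 / 2 * a x * (M * (h' (φ x) * φ' x)) ^ 2 + b x * G 0 := by
  obtain ⟨h0, h1⟩ := hh.mem_Icc _ hφx
  have hv : M * h (φ x) ∈ Icc 0 M := ⟨mul_nonneg hM h0, mul_le_of_le_one_right hM h1⟩
  rw [energyDensity, plateauTest_of_neg_le hh hφ hx, plateauTestDeriv_of_neg_le hh hφ hx]
  exact add_le_add le_rfl (mul_le_mul_of_nonneg_left (hG _ hv) hbnn)

lemma integral_dirichlet_comp_capacitaryPotential (hac : Continuous a) (hapos : ∀ x, 0 < a x)
    (htL : t < L) (hh' : Continuous h') :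
    ∫ x in t..L, 1 / 2 * a x *
        (M * (h' (capacitaryPotential a L t x) * capacitaryPotentialDeriv a L t x)) ^ 2 =
      M ^ 2 / (2 * ∫ y in t..L, 1 / a y) * ∫ s in (0:ℝ)..1, h' s ^ 2 := by
  set I := ∫ y in t..L, 1 / a y with hIdef
  have hI : 0 < I := integral_one_div_pos hac hapos htL
  have hsubst := integral_comp_mul_deriv (a := t) (b := L) (f := capacitaryPotential a L t)
    (g := fun s => h' s ^ 2) (fun x _ => hasDerivAt_capacitaryPotential hac hapos x)
    (continuous_capacitaryPotentialDeriv hac hapos).continuousOn (hh'.pow 2)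
  rw [capacitaryPotential_self_eq_one hac hapos htL, capacitaryPotential_right_eq_zero,
    integral_symm 0 1] at hsubst
  calc _ = ∫ x in t..L, -(M ^ 2 / (2 * I)) *
        (((fun s => h' s ^ 2) ∘ capacitaryPotential a L t) x * capacitaryPotentialDeriv a L t x) :=
        integral_congr fun x _ => by
          have := (hapos x).ne'
          simp only [Function.comp, capacitaryPotentialDeriv, ← hIdef]
          field_simp
    _ = _ := by rw [intervalIntegral.integral_const_mul, hsubst]; ring

lemma continuous_energyDensity_plateauTest (hac : Continuous a) (hapos : ∀ x, 0 < a x)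
    (hbc : Continuous b) (hGc : Continuous G) (hh : IsRampProfile h h') :
    Continuous (energyDensity a b G (plateauTest h (capacitaryPotential a L t) M)
      (plateauTestDeriv h' (capacitaryPotential a L t) (capacitaryPotentialDeriv a L t) M)) :=
  continuous_energyDensity hac hbc hGc
    (continuous_iff_continuousAt.mpr fun x => (hasDerivAt_plateauTest hh.hasDerivAt
      (hasDerivAt_capacitaryPotential hac hapos) x).continuousAt)
    (continuous_plateauTestDeriv hh.continuous_deriv (continuous_capacitaryPotential hac hapos)
      (continuous_capacitaryPotentialDeriv hac hapos))

lemma integral_energyDensity_plateauTest_le (hac : Continuous a) (hapos : ∀ x, 0 < a x)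
    (hbc : Continuous b) (hbnn : ∀ x, 0 ≤ b x) (hGc : Continuous G) (hGM : G M = 0)
    (hG : ∀ s ∈ Icc 0 M, G s ≤ G 0) (hM : 0 ≤ M) (ht : t ∈ Ioo 0 L) (hh : IsRampProfile h h') :
    ∫ x in (0:ℝ)..L, energyDensity a b G (plateauTest h (capacitaryPotential a L t) M)
        (plateauTestDeriv h' (capacitaryPotential a L t) (capacitaryPotentialDeriv a L t) M) x ≤
      M ^ 2 / (2 * ∫ y in t..L, 1 / a y) * (∫ s in (0:ℝ)..1, h' s ^ 2) +
        G 0 * ∫ x in t..L, b x := by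
  set φ := capacitaryPotential a L t
  set φ' := capacitaryPotentialDeriv a L t
  have hφ : ∀ x ≤ t, 1 ≤ φ x := fun x hx => one_le_capacitaryPotential hac hapos ht.2 hx
  have hcont := continuous_energyDensity_plateauTest (L := L) (t := t) (M := M) hac hapos hbc hGc hh
  have hkin : Continuous fun x => 1 / 2 * a x * (M * (h' (φ x) * φ' x)) ^ 2 := by
    have := hh.continuous_deriv
    have := continuous_capacitaryPotential (L := L) (t := t) hac hapos
    have := continuous_capacitaryPotentialDeriv (L := L) (t := t) hac hapos
    fun_prop
  have hplateau : ∫ x in (0:ℝ)..t, energyDensity a b G (plateauTest h φ M)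
      (plateauTestDeriv h' φ φ' M) x = 0 := by
    refine (integral_congr (g := fun _ => 0) fun x hx => ?_).trans intervalIntegral.integral_zero
    rw [uIcc_of_le ht.1.le] at hx
    exact energyDensity_plateauTest_eq_zero hh hφ hGM ⟨by linarith [hx.1, ht.1], hx.2⟩
  have hslope : ∫ x in t..L, energyDensity a b G (plateauTest h φ M) (plateauTestDeriv h' φ φ' M) x
      ≤ ∫ x in t..L, (1 / 2 * a x * (M * (h' (φ x) * φ' x)) ^ 2 + b x * G 0) :=
    integral_mono_on ht.2.le (hcont.intervalIntegrable _ _)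
      ((hkin.add (hbc.mul_const (G 0))).intervalIntegrable _ _)
      fun x hx => energyDensity_plateauTest_le hh hφ (hbnn x) hG hM (by linarith [hx.1, ht.1])
        (capacitaryPotential_mem_Icc hac hapos ht.2 hx)
  rw [← integral_add_adjacent_intervals (hcont.intervalIntegrable 0 t)
    (hcont.intervalIntegrable t L), hplateau, zero_add]
  refine hslope.trans_eq ?_
  rw [integral_add (hkin.intervalIntegrable _ _) ((hbc.mul_const (G 0)).intervalIntegrable _ _),
    integral_dirichlet_comp_capacitaryPotential hac hapos ht.2 hh.continuous_deriv,
    intervalIntegral.integral_mul_const]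
  ring

lemma energy_plateauTest_le (hac : Continuous a) (hapos : ∀ x, 0 < a x)
    (haeven : ∀ x, a (-x) = a x) (hbc : Continuous b) (hbnn : ∀ x, 0 ≤ b x)
    (hbeven : ∀ x, b (-x) = b x) (hGc : Continuous G) (hGM : G M = 0)
    (hG : ∀ s ∈ Icc 0 M, G s ≤ G 0) (hM : 0 ≤ M) (ht : t ∈ Ioo 0 L) (hh : IsRampProfile h h') :
    energy a b G L (plateauTest h (capacitaryPotential a L t) M)
        (plateauTestDeriv h' (capacitaryPotential a L t) (capacitaryPotentialDeriv a L t) M) ≤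
      M ^ 2 / (∫ y in t..L, 1 / a y) * (∫ s in (0:ℝ)..1, h' s ^ 2) +
        2 * G 0 * ∫ x in t..L, b x := by
  rw [energy, integral_eq_two_mul_of_even
    (continuous_energyDensity_plateauTest hac hapos hbc hGc hh)
    (energyDensity_neg haeven hbeven (fun _ => plateauTest_neg) (fun _ => plateauTestDeriv_neg))]
  have hhalf :=
    integral_energyDensity_plateauTest_le hac hapos hbc hbnn hGc hGM hG hM ht hh
  calc _ ≤ 2 * (M ^ 2 / (2 * ∫ y in t..L, 1 / a y) * (∫ s in (0:ℝ)..1, h' s ^ 2) +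
        G 0 * ∫ x in t..L, b x) := by linarith
    _ = _ := by ring

lemma isAdmissible_plateauTest (hac : Continuous a) (hapos : ∀ x, 0 < a x) (ht : t ∈ Ioo 0 L)
    (hh : IsRampProfile h h') :
    IsAdmissible L (plateauTest h (capacitaryPotential a L t) M)
      (plateauTestDeriv h' (capacitaryPotential a L t) (capacitaryPotentialDeriv a L t) M) := by
  have hvL : plateauTest h (capacitaryPotential a L t) M L = 0 := by
    rw [plateauTest_of_neg_le hh (fun x => one_le_capacitaryPotential hac hapos ht.2)
      (by linarith [ht.1, ht.2]), capacitaryPotential_right_eq_zero, hh.map_zero, mul_zero]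
  refine ⟨fun x _ => (hasDerivAt_plateauTest hh.hasDerivAt
      (hasDerivAt_capacitaryPotential hac hapos) x).hasDerivWithinAt, ?_,
    plateauTest_neg.trans hvL, hvL⟩
  exact (continuous_plateauTestDeriv hh.continuous_deriv (continuous_capacitaryPotential hac hapos)
    (continuous_capacitaryPotentialDeriv hac hapos)).continuousOn

lemma sInf_energy_le {v v' : ℝ → ℝ} (hann : ∀ x, 0 ≤ a x) (hbnn : ∀ x, 0 ≤ b x)
    (hGnn : ∀ s, 0 ≤ G s) (hL : 0 ≤ L) (hv : IsAdmissible L v v') :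
    sInf {E : ℝ | ∃ v v' : ℝ → ℝ,
        (∀ x ∈ Icc (-L) L, HasDerivWithinAt v (v' x) (Icc (-L) L) x) ∧
        ContinuousOn v' (Icc (-L) L) ∧ v (-L) = 0 ∧ v L = 0 ∧ E = energy a b G L v v'} ≤
      energy a b G L v v' := by
  obtain ⟨hder, hcont, hleft, hright⟩ := hv
  refine csInf_le ⟨0, ?_⟩ ⟨v, v', hder, hcont, hleft, hright, rfl⟩
  rintro E ⟨u, u', -, -, -, -, rfl⟩
  exact integral_nonneg (by linarith) fun x _ => energyDensity_nonneg hann hbnn hGnn x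

end Energy

end

theorem stmt_19_general (a b G : ℝ → ℝ) (M L : ℝ) (hM : 0 < M)
    (hac : Continuous a) (hbc : Continuous b) (hGc : Continuous G)
    (hapos : ∀ x, 0 < a x) (hbpos : ∀ x, 0 < b x)
    (haeven : ∀ x, a (-x) = a x) (hbeven : ∀ x, b (-x) = b x)
    (hGge : ∀ s, 0 ≤ G s) (hGM : G M = 0) (hGpos : ∀ s ∈ Ico (0:ℝ) M, 0 < G s)
    (hG0 : ∀ s ∈ Ioo (0:ℝ) M, G s ≤ G 0)
    (hcond : ∃ t ∈ Ioo (0:ℝ) L,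
      M ^ 2 / (2 * G 0) < (∫ x in t..L, 1 / a x) * ∫ x in (0:ℝ)..t, b x) :
    sInf {E : ℝ | ∃ v v' : ℝ → ℝ,
        (∀ x ∈ Icc (-L) L, HasDerivWithinAt v (v' x) (Icc (-L) L) x) ∧
        ContinuousOn v' (Icc (-L) L) ∧ v (-L) = 0 ∧ v L = 0 ∧
        E = ∫ x in (-L)..L, ((1/2) * a x * v' x ^ 2 + b x * G (v x))} <
      ∫ x in (-L)..L, b x * G 0 := by
  obtain ⟨t, ht, hcond⟩ := hcond
  set I := ∫ x in t..L, 1 / a x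
  have hI : 0 < I := integral_one_div_pos hac hapos ht.2
  have hgap : M ^ 2 / I < 2 * G 0 * ∫ x in (0:ℝ)..t, b x := by
    have hG0 : 0 < G 0 := hGpos 0 ⟨le_rfl, hM⟩
    rw [div_lt_iff₀ (by positivity)] at hcond ⊢
    linarith
  obtain ⟨n, hn, hlt⟩ := exists_ne_zero_mul_one_add_one_div_lt hgap
  have hG : ∀ s ∈ Icc 0 M, G s ≤ G 0 := fun s hs => by
    rcases hs.1.eq_or_lt with rfl | hs0
    · rfl
    rcases hs.2.eq_or_lt with rfl | hsM
    · exact hGM ▸ hGge 0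
    · exact hG0 s ⟨hs0, hsM⟩
  have hh := isRampProfile_ramp hn
  calc _ ≤ energy a b G L (plateauTest (ramp n) (capacitaryPotential a L t) M)
        (plateauTestDeriv (rampDeriv n) (capacitaryPotential a L t)
          (capacitaryPotentialDeriv a L t) M) :=
        sInf_energy_le (fun x => (hapos x).le) (fun x => (hbpos x).le) hGge
          (by linarith [ht.1, ht.2]) (isAdmissible_plateauTest hac hapos ht hh)
    _ ≤ M ^ 2 / I * (∫ s in (0:ℝ)..1, rampDeriv n s ^ 2) + 2 * G 0 * ∫ x in t..L, b x :=
        energy_plateauTest_le hac hapos haeven hbc (fun x => (hbpos x).le) hbeven hGc hGM hG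
          hM.le ht hh
    _ ≤ M ^ 2 / I * (1 + 1 / n) + 2 * G 0 * ∫ x in t..L, b x := by
        gcongr
        exact integral_sq_rampDeriv_le hn
    _ < 2 * G 0 * (∫ x in (0:ℝ)..t, b x) + 2 * G 0 * ∫ x in t..L, b x := by linarith
    _ = ∫ x in (-L)..L, b x * G 0 := (integral_mul_const_eq_of_even hbc hbeven _ t L).symm

/-- Proposition 5.4 (i). Under the stated sign conditions on `G`
and the condition `sup_{t ∈ (0,L)} (∫ₜᴸ 1/a)(∫₀ᵗ b) > M² / (2 G(0))`, the zero
function is not a minimizer: `inf_{v ∈ H¹₀((-L,L))} 𝓔(v) < 𝓔(0) = ∫ b G(0)`. -/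
theorem stmt_19 (a b G : ℝ → ℝ) (M L : ℝ) (hM : 0 < M) (hL : 0 < L)
    (hac : Continuous a) (hbc : Continuous b) (hGc : Continuous G)
    (hapos : ∀ x, 0 < a x) (hbpos : ∀ x, 0 < b x)
    (haeven : ∀ x, a (-x) = a x) (hbeven : ∀ x, b (-x) = b x)
    (hGeven : ∀ s, G (-s) = G s)
    (hGge : ∀ s, 0 ≤ G s) (hGM : G M = 0) (hGpos : ∀ s ∈ Ico (0:ℝ) M, 0 < G s)
    (hG0 : ∀ s ∈ Ioo (0:ℝ) M, G s ≤ G 0)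
    (hcond : ∃ t ∈ Ioo (0:ℝ) L,
      M ^ 2 / (2 * G 0) < (∫ x in t..L, 1 / a x) * ∫ x in (0:ℝ)..t, b x) :
    sInf {E : ℝ | ∃ v v' : ℝ → ℝ,
        (∀ x ∈ Icc (-L) L, HasDerivWithinAt v (v' x) (Icc (-L) L) x) ∧
        ContinuousOn v' (Icc (-L) L) ∧ v (-L) = 0 ∧ v L = 0 ∧
        E = ∫ x in (-L)..L, ((1/2) * a x * v' x ^ 2 + b x * G (v x))} <
      ∫ x in (-L)..L, b x * G 0 :=
  stmt_19_general a b G M L hM hac hbc hGc hapos hbpos haeven hbeven hGge hGM hGpos hG0 hcond
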